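/- If G and H are finite groups, not both of order ≤ 2, with G and H nontrivial and at least one of order ≥ 3, then G * H is not virtually cyclic. -/

import Mathlib

/-!
Pick distinct nontrivial `a, a' ∈ G` and a nontrivial `b ∈ H`. If `L` were a cyclic subgroup of
finite index, some positive powers `(a b)^m` and `(a' b)^n` would lie in `L` and hence commute.
But `(a b)^m (a' b)^n` and `(a' b)^n (a b)^m` are products of reduced words beginning with the
letters `a` and `a'` respectively, so by uniqueness of reduced words they are different.
-/

theorem exists_pair_ne_of_three_le_card {α : Type*} (h : 3 ≤ Nat.card α) (x : α) :
    ∃ a b : α, a ≠ b ∧ a ≠ x ∧ b ≠ x := by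
  have : Finite α := Nat.finite_of_card_ne_zero (by omega)
  have := Fintype.ofFinite α
  obtain ⟨a, b, c, hab, hac, hbc⟩ :=
    Fintype.two_lt_card_iff.mp (Nat.card_eq_fintype_card (α := α) ▸ h)
  by_cases ha : a = x
  · exact ⟨b, c, hbc, ha ▸ hab.symm, ha ▸ hac.symm⟩
  by_cases hb : b = x
  · exact ⟨a, c, hac, ha, hb ▸ hbc.symm⟩
  · exact ⟨a, b, hab, ha, hb⟩

theorem Subgroup.exists_pow_commute_of_finiteIndex {Γ : Type*} [Group Γ] (L : Subgroup Γ)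
    [L.FiniteIndex] [IsMulCommutative L] (x y : Γ) :
    ∃ m n : ℕ, m ≠ 0 ∧ n ≠ 0 ∧ Commute (x ^ m) (y ^ n) := by
  obtain ⟨m, hm, -, hxm⟩ := L.exists_pow_mem_of_index_ne_zero L.index_ne_zero_of_finite x
  obtain ⟨n, hn, -, hyn⟩ := L.exists_pow_mem_of_index_ne_zero L.index_ne_zero_of_finite y
  exact ⟨m, n, hm.ne', hn.ne', setLike_mul_comm hxm hyn⟩

namespace Monoid.CoprodI

variable {ι : Type*} {M : ι → Type*} [∀ i, Monoid (M i)]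

namespace NeWord

theorem head_eq_of_prod_eq [DecidableEq ι] [∀ i, DecidableEq (M i)] {i j k : ι}
    {w₁ : NeWord M i j} {w₂ : NeWord M i k} (h : w₁.prod = w₂.prod) : w₁.head = w₂.head := by
  have hword : w₁.toWord = w₂.toWord := Word.equiv.symm.injective h
  have hhead := congrArg List.head? (congrArg Word.toList hword)
  simp only [toWord, toList_head?, Option.some.injEq] at hhead
  exact eq_of_heq (Sigma.mk.inj hhead).2

/-- The reduced word `a b a b ⋯ a b` with `n + 1` factors `a b`. -/
def alternating {i j : ι} (hij : i ≠ j) {a : M i} {b : M j} (ha : a ≠ 1) (hb : b ≠ 1) :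
    ℕ → NeWord M i j
  | 0 => append (singleton a ha) hij (singleton b hb)
  | n + 1 => append (alternating hij ha hb n) hij.symm (alternating hij ha hb 0)

variable {i j : ι} (hij : i ≠ j) {a : M i} {b : M j} (ha : a ≠ 1) (hb : b ≠ 1)

@[simp]
theorem alternating_head (n : ℕ) : (alternating hij ha hb n).head = a := by
  induction n with
  | zero => simp [alternating]
  | succ n ih => simp [alternating, ih]

@[simp]
theorem alternating_prod [DecidableEq ι] [∀ i, DecidableEq (M i)] (n : ℕ) :
    (alternating hij ha hb n).prod = (of a * of b) ^ (n + 1) := by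
  induction n with
  | zero => simp [alternating]
  | succ n ih =>
    rw [pow_succ, ← ih, alternating, append_prod, alternating, append_prod]
    simp

end NeWord

open NeWord in
theorem not_commute_pow_of_mul_of {i j : ι} (hij : i ≠ j) {a a' : M i} {b : M j}
    (ha : a ≠ 1) (ha' : a' ≠ 1) (hb : b ≠ 1) (haa' : a ≠ a') {m n : ℕ} (hm : m ≠ 0)
    (hn : n ≠ 0) : ¬ Commute ((of a * of b) ^ m) ((of a' * of b) ^ n) := by
  classical
  intro hcomm
  obtain ⟨m, rfl⟩ := Nat.exists_eq_succ_of_ne_zero hm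
  obtain ⟨n, rfl⟩ := Nat.exists_eq_succ_of_ne_zero hn
  have hprod : (append (alternating hij ha hb m) hij.symm (alternating hij ha' hb n)).prod =
      (append (alternating hij ha' hb n) hij.symm (alternating hij ha hb m)).prod := by
    simpa using hcomm.eq
  exact haa' (by simpa using head_eq_of_prod_eq hprod)

end Monoid.CoprodI

namespace Monoid.Coprod

universe u v

/-- `ULift` puts both factors in one universe, so that `G ∗ H` maps to a `Bool`-indexed
coproduct. -/
abbrev pairFamily (G : Type u) (H : Type v) : Bool → Type (max u v) :=
  fun b => cond b (ULift.{v} G) (ULift.{u} H)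

variable {G : Type u} {H : Type v} [Monoid G] [Monoid H]

instance : ∀ b, Monoid (pairFamily G H b)
  | true => inferInstanceAs (Monoid (ULift G))
  | false => inferInstanceAs (Monoid (ULift H))

def toCoprodI : G ∗ H →* CoprodI (pairFamily G H) :=
  lift ((CoprodI.of (i := true)).comp MulEquiv.ulift.symm.toMonoidHom)
    ((CoprodI.of (i := false)).comp MulEquiv.ulift.symm.toMonoidHom)

theorem not_commute_pow_of_inl_mul_inr {a a' : G} {b : H} (ha : a ≠ 1) (ha' : a' ≠ 1)
    (hb : b ≠ 1) (haa' : a ≠ a') {m n : ℕ} (hm : m ≠ 0) (hn : n ≠ 0) :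
    ¬ Commute ((inl a * inr b) ^ m) ((inl a' * inr b) ^ n) := by
  intro h
  have h' := h.map toCoprodI
  simp only [toCoprodI, map_pow, map_mul, lift_apply_inl, lift_apply_inr] at h'
  exact CoprodI.not_commute_pow_of_mul_of (M := pairFamily G H) (i := true) (j := false)
    (by decide) (a := .up a) (a' := .up a') (b := .up b) (mt (congrArg ULift.down) ha)
    (mt (congrArg ULift.down) ha') (mt (congrArg ULift.down) hb) (mt (congrArg ULift.down) haa')
    hm hn h'

end Monoid.Coprod

theorem coprod_not_virtually_cyclic_general (G H : Type*) [Group G] [Group H]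
    [Nontrivial H] (hG : 3 ≤ Nat.card G) :
    ¬ ∃ L : Subgroup (Monoid.Coprod G H), L.FiniteIndex ∧ IsCyclic L := by
  rintro ⟨L, hL, hcyc⟩
  obtain ⟨a, a', haa', ha, ha'⟩ := exists_pair_ne_of_three_le_card hG 1
  obtain ⟨b, hb⟩ := exists_ne (1 : H)
  obtain ⟨m, n, hm, hn, hcomm⟩ := L.exists_pow_commute_of_finiteIndex
    (Monoid.Coprod.inl a * .inr b) (Monoid.Coprod.inl a' * .inr b)
  exact Monoid.Coprod.not_commute_pow_of_inl_mul_inr ha ha' hb haa' hm hn hcomm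

/-- If G and H are nontrivial finite groups with |G| ≥ 3, then the free product G * H is
not virtually cyclic (it has no cyclic subgroup of finite index). -/
theorem coprod_not_virtually_cyclic (G H : Type*) [Group G] [Group H]
    [Finite G] [Finite H] [Nontrivial G] [Nontrivial H] (hG : 3 ≤ Nat.card G) :
    ¬ ∃ L : Subgroup (Monoid.Coprod G H), L.FiniteIndex ∧ IsCyclic L :=
  coprod_not_virtually_cyclic_general G H hG
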